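/- In the presheaf category Set^(ω^op) (the topos of trees), with the delay functor ▷ defined by (▷X)(0)=1 and (▷X)(n+1)=X(n), and point p_X given by restriction maps, every morphism f : ▷X × Y → X has a unique morphism f† : Y → X such that f† = f ∘ (p_X × id_Y) ∘ ⟨f†, id_Y⟩. -/
import Mathlib


/-- The "later" endofunctor on objects of `Set^(ω^op)`: `(▷X)(0) = 1`, `(▷X)(n+1) = X(n)`. -/
def laterObj (X : ℕ → Type) : ℕ → Type
  | 0 => PUnit
  | n + 1 => X n

/-- Restriction maps of the presheaf `▷X`. -/
def laterRes (X : ℕ → Type) (rX : ∀ n, X (n + 1) → X n) :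
    ∀ n, laterObj X (n + 1) → laterObj X n
  | 0, _ => PUnit.unit
  | n + 1, x => rX n x

/-- The point `p_X : X → ▷X`. -/
def laterPoint (X : ℕ → Type) (rX : ∀ n, X (n + 1) → X n) :
    ∀ n, X n → laterObj X n
  | 0, _ => PUnit.unit
  | n + 1, x => rX n x

/-- In the topos of trees, every `f : ▷X × Y → X` has a unique guarded fixpoint
`f† : Y → X` with `f† = f ∘ (p_X × id_Y) ∘ ⟨f†, id_Y⟩`. -/
theorem stmt0 (X Y : ℕ → Type) (rX : ∀ n, X (n + 1) → X n) (rY : ∀ n, Y (n + 1) → Y n)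
    (f : ∀ n, laterObj X n × Y n → X n)
    (hf : ∀ n (a : laterObj X (n + 1)) (b : Y (n + 1)),
      f n (laterRes X rX n a, rY n b) = rX n (f (n + 1) (a, b))) :
    ∃! s : { s : ∀ n, Y n → X n // ∀ n y, s n (rY n y) = rX n (s (n + 1) y) },
      ∀ n y, s.1 n y = f n (laterPoint X rX n (s.1 n y), y) := by
  classical
  -- construct the fixpoint by recursion
  let s : ∀ n, Y n → X n := fun n => Nat.rec (motive := fun n => Y n → X n)
    (fun y => f 0 (PUnit.unit, y))
    (fun n sn y => f (n + 1) (sn (rY n y), y)) n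
  have hs0 : ∀ y, s 0 y = f 0 (PUnit.unit, y) := fun _ => rfl
  have hsS : ∀ n y, s (n + 1) y = f (n + 1) (s n (rY n y), y) := fun _ _ => rfl
  have hnat : ∀ n y, s n (rY n y) = rX n (s (n + 1) y) := by
    intro n
    induction n with
    | zero =>
      intro y
      rw [hsS 0 y, hs0]
      exact hf 0 (s 0 (rY 0 y)) y
    | succ n ih =>
      intro y
      rw [hsS (n + 1) y, hsS n (rY (n + 1) y)]
      have := hf (n + 1) (s (n + 1) (rY (n + 1) y)) y
      simpa [laterRes, ← ih] using this
  refine ⟨⟨s, hnat⟩, ?_, ?_⟩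
  · intro n y
    cases n with
    | zero => rfl
    | succ n =>
      show s (n + 1) y = f (n + 1) (rX n (s (n + 1) y), y)
      rw [← hnat n y, hsS]
  · rintro ⟨t, tnat⟩ ht
    have : t = s := by
      funext n
      induction n with
      | zero =>
        funext y
        exact ht 0 y
      | succ n ih =>
        funext y
        have h := ht (n + 1) y
        simp only [laterPoint] at h
        rw [h, ← tnat n y, ih, hsS]
    simp [this]
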